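/- Let D be positive diagonal and A symmetric non-negative with D − A symmetric positive definite. Then the spectral radius of D⁻¹A is strictly less than 1, and for every positive integer m, the matrix D − D(D⁻¹A)^{2^m} is symmetric positive definite. -/

import Mathlib

/-!
Write `D = E * E` with `E` the positive diagonal square root and put `M = E⁻¹ A E⁻¹`. Then
`D ± A = E (1 ± M) E`, `D⁻¹ A = E⁻¹ M E` and `D - D (D⁻¹ A) ^ N = E (1 - M ^ N) E`. Because `A` is
entrywise non-negative, `|x|ᵀ (D - A) |x| ≤ xᵀ (D + A) x`, so `D + A` is positive definite along
with `D - A`. Hence the spectrum of the symmetric matrix `M`, which is also that of `D⁻¹ A`, lies in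
`(-1, 1)`, and by the spectral mapping theorem `1 - M ^ N` is positive definite for every `N ≥ 1`.
-/

open Matrix

namespace Matrix

variable {n : Type*} [Fintype n] [DecidableEq n]

section Spectrum

variable {M : Matrix n n ℝ}

theorem IsHermitian.posDef_iff_forall_mem_spectrum_pos (hM : M.IsHermitian) :
    M.PosDef ↔ ∀ μ ∈ spectrum ℝ M, 0 < μ := by
  rw [hM.posDef_iff_eigenvalues_pos, hM.spectrum_real_eq_range_eigenvalues, Set.forall_mem_range]

theorem IsHermitian.posDef_cfc_iff (hM : M.IsHermitian) (f : ℝ → ℝ) :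
    (cfc f M).PosDef ↔ ∀ μ ∈ spectrum ℝ M, 0 < f μ := by
  have hfM : (cfc f M).IsHermitian := cfc_predicate f M
  rw [hfM.posDef_iff_forall_mem_spectrum_pos,
    cfc_map_spectrum f M hM.isSelfAdjoint (finite_real_spectrum.continuousOn f),
    Set.forall_mem_image]

theorem abs_lt_one_of_mem_spectrum (h₁ : (1 - M).PosDef) (h₂ : (1 + M).PosDef) :
    ∀ μ ∈ spectrum ℝ M, |μ| < 1 := by
  have hM : M.IsHermitian := by simpa using isHermitian_one.sub h₁.1
  rw [← cfc_id' ℝ M hM.isSelfAdjoint, ← cfc_const_one ℝ M, ← cfc_sub .., hM.posDef_cfc_iff] at h₁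
  rw [← cfc_id' ℝ M hM.isSelfAdjoint, ← cfc_const_one ℝ M, ← cfc_add .., hM.posDef_cfc_iff] at h₂
  exact fun μ hμ => abs_lt.mpr ⟨by linarith [h₂ μ hμ], by linarith [h₁ μ hμ]⟩

theorem IsHermitian.posDef_one_sub_pow (hM : M.IsHermitian)
    (h : ∀ μ ∈ spectrum ℝ M, |μ| < 1) {N : ℕ} (hN : N ≠ 0) : (1 - M ^ N).PosDef := by
  rw [← cfc_pow_id (R := ℝ) M N hM.isSelfAdjoint, ← cfc_const_one ℝ M, ← cfc_sub ..,
    hM.posDef_cfc_iff]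
  intro μ hμ
  have hμN : |μ ^ N| < 1 := by rw [abs_pow]; exact pow_lt_one₀ (abs_nonneg μ) (h μ hμ) hN
  exact sub_pos.mpr ((le_abs_self _).trans_lt hμN)

end Spectrum

omit [DecidableEq n] in
theorem abs_dotProduct_mulVec_le {A : Matrix n n ℝ} (hA : ∀ i j, 0 ≤ A i j) (x : n → ℝ) :
    |x ⬝ᵥ A *ᵥ x| ≤ |x| ⬝ᵥ A *ᵥ |x| := by
  simp only [dotProduct, mulVec, Pi.abs_apply]
  refine (Finset.abs_sum_le_sum_abs _ _).trans (Finset.sum_le_sum fun i _ => ?_)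
  rw [abs_mul]
  gcongr
  refine (Finset.abs_sum_le_sum_abs _ _).trans_eq (Finset.sum_congr rfl fun j _ => ?_)
  rw [abs_mul, abs_of_nonneg (hA i j)]

theorem PosDef.diagonal_add_of_diagonal_sub {d : n → ℝ} {A : Matrix n n ℝ}
    (hA : ∀ i j, 0 ≤ A i j) (h : (diagonal d - A).PosDef) : (diagonal d + A).PosDef := by
  have hAh : A.IsHermitian := by simpa using (isHermitian_diagonal d).sub h.1
  refine .of_dotProduct_mulVec_pos ((isHermitian_diagonal d).add hAh) fun x hx => ?_
  have hdiag : |x| ⬝ᵥ diagonal d *ᵥ |x| = x ⬝ᵥ diagonal d *ᵥ x := by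
    simp only [dotProduct, mulVec_diagonal, Pi.abs_apply]
    exact Finset.sum_congr rfl fun i _ => by rw [mul_left_comm, abs_mul_abs_self, mul_left_comm]
  have hpos := h.dotProduct_mulVec_pos (x := |x|) (by simpa using hx)
  simp only [star_trivial, sub_mulVec, dotProduct_sub, hdiag] at hpos
  simp only [star_trivial, add_mulVec, dotProduct_add]
  linarith [neg_abs_le (x ⬝ᵥ A *ᵥ x), abs_dotProduct_mulVec_le hA x]

section Similarity

variable {R : Type*} [CommRing R] {E : Matrix n n R} (hE : IsUnit E)
include hE

theorem spectrum_nonsing_inv_mul_mul (M : Matrix n n R) :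
    spectrum R (E⁻¹ * M * E) = spectrum R M := by
  lift E to (Matrix n n R)ˣ using hE
  rw [← coe_units_inv, spectrum.units_conjugate']

theorem mul_self_nonsing_inv_mul (A : Matrix n n R) :
    (E * E)⁻¹ * A = E⁻¹ * (E⁻¹ * A * E⁻¹) * E := by
  rw [mul_inv_rev]
  simp only [mul_assoc, nonsing_inv_mul E ((isUnit_iff_isUnit_det E).mp hE), mul_one]

theorem mul_self_sub_mul_pow (A : Matrix n n R) (N : ℕ) :
    E * E - E * E * ((E * E)⁻¹ * A) ^ N = E * (1 - (E⁻¹ * A * E⁻¹) ^ N) * E := by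
  rw [mul_self_nonsing_inv_mul hE]
  lift E to (Matrix n n R)ˣ using hE
  rw [← coe_units_inv, Units.conj_pow']
  simp only [mul_sub, sub_mul, mul_one, mul_assoc, Units.mul_inv_cancel_left]

end Similarity

theorem IsHermitian.posDef_mul_mul_iff {R : Type*} [Ring R] [PartialOrder R] [StarRing R]
    {E X : Matrix n n R} (hE : E.IsHermitian) (hu : IsUnit E) :
    (E * X * E).PosDef ↔ X.PosDef := by
  simpa only [hE.star_eq] using hu.posDef_star_left_conjugate_iff (x := X)

theorem isUnit_diagonal_sqrt {f : n → ℝ} (hf : ∀ i, 0 < f i) :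
    IsUnit (diagonal fun i => √(f i)) :=
  isUnit_diagonal.mpr (Pi.isUnit_iff.mpr fun i => (Real.sqrt_pos.mpr (hf i)).ne'.isUnit)

theorem diagonal_sqrt_mul_self {f : n → ℝ} (hf : ∀ i, 0 ≤ f i) :
    (diagonal fun i => √(f i)) * diagonal (fun i => √(f i)) = diagonal f := by
  rw [diagonal_mul_diagonal]
  exact congrArg diagonal (funext fun i => Real.mul_self_sqrt (hf i))

end Matrix

theorem stmt9_general {n : ℕ} (D A : Matrix (Fin n) (Fin n) ℝ) (f : Fin n → ℝ)
    (hf : ∀ k, 0 < f k) (hD : D = Matrix.diagonal f)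
    (hAnn : ∀ i j, 0 ≤ A i j)
    (hPD : (D - A).PosDef) :
    (∀ μ ∈ spectrum ℝ (D⁻¹ * A), |μ| < 1) ∧
      ∀ m : ℕ, 1 ≤ m → (D - D * (D⁻¹ * A) ^ (2 ^ m)).PosDef := by
  subst hD
  set E : Matrix (Fin n) (Fin n) ℝ := diagonal fun i => √(f i)
  have hE : IsUnit E := isUnit_diagonal_sqrt hf
  have hEE : E * E = diagonal f := diagonal_sqrt_mul_self fun i => (hf i).le
  have hEpd (X : Matrix (Fin n) (Fin n) ℝ) : (E * X * E).PosDef ↔ X.PosDef :=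
    (isHermitian_diagonal _).posDef_mul_mul_iff hE
  set M := E⁻¹ * A * E⁻¹
  have hEME : E * M * E = A := by
    have hdet := (isUnit_iff_isUnit_det E).mp hE
    simp only [M, mul_assoc, mul_nonsing_inv_cancel_left _ _ hdet, nonsing_inv_mul _ hdet, mul_one]
  have h₁ : (1 - M).PosDef := by
    rwa [← hEpd, mul_sub, sub_mul, mul_one, hEME, hEE]
  have h₂ : (1 + M).PosDef := by
    rw [← hEpd, mul_add, add_mul, mul_one, hEME, hEE]
    exact hPD.diagonal_add_of_diagonal_sub hAnn
  have hM : M.IsHermitian := by simpa using isHermitian_one.sub h₁.1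
  have hspec := abs_lt_one_of_mem_spectrum h₁ h₂
  rw [← hEE]
  refine ⟨fun μ hμ => hspec μ ?_, fun m _ => ?_⟩
  · rwa [mul_self_nonsing_inv_mul hE, spectrum_nonsing_inv_mul_mul hE] at hμ
  · rw [mul_self_sub_mul_pow hE, hEpd]
    exact hM.posDef_one_sub_pow hspec (by positivity)

/-- If `D` is positive diagonal, `A` symmetric non-negative with zero diagonal, and
`D − A` is symmetric positive definite (SDDM), then the spectral radius of
`D⁻¹A` is strictly less than 1, and for every positive integer `m`,
`D − D(D⁻¹A)^{2^m}` is symmetric positive definite. -/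
theorem stmt9 {n : ℕ} (D A : Matrix (Fin n) (Fin n) ℝ) (f : Fin n → ℝ)
    (hf : ∀ k, 0 < f k) (hD : D = Matrix.diagonal f)
    (hAsym : Aᵀ = A) (hAnn : ∀ i j, 0 ≤ A i j) (hAdiag : ∀ i, A i i = 0)
    (hPD : (D - A).PosDef)
    (hdd : ∀ i, -∑ j ∈ Finset.univ.erase i, (D - A) i j ≤ (D - A) i i) :
    (∀ μ ∈ spectrum ℝ (D⁻¹ * A), |μ| < 1) ∧
      ∀ m : ℕ, 1 ≤ m → (D - D * (D⁻¹ * A) ^ (2 ^ m)).PosDef :=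
  stmt9_general D A f hf hD hAnn hPD
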